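/- Let t₀ < t_i be reals with t₀ − 1 < t₀, let ψ₀ : ℝ^d → ℝ be bounded and ℤ^d-periodic, and for t > t₀ − 1 define ψ(x, t) = inf{ ψ₀(γ(t₀−1)) + A^{W,b}_{t₀−1,t}(γ) : γ absolutely continuous on [t₀−1, t] with γ(t) = x }. Then for any x₀, x_i ∈ ℝ^d there is a constant c > 0, depending only on d, |b|, C₀, C₁, x₀, x_i, t₀ and t_i (and not on W), such that |ψ(x_i, t_i) − ψ(x₀, t₀)| ≤ c·( 1 + max_{t₀−1 ≤ τ ≤ t_i} |W(τ) − W(t_i)|² ). -/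

import Mathlib

open MeasureTheory Set Real RealInnerProductSpace

/-- `γ : [s,t] → ℝ^d` is absolutely continuous with (integrable) derivative `γ'`:
`γ τ = γ s + ∫_s^τ γ' u du` for all `τ ∈ [s,t]`. -/
def IsACWith {d : ℕ} (γ γ' : ℝ → EuclideanSpace ℝ (Fin d)) (s t : ℝ) : Prop :=
  IntervalIntegrable γ' volume s t ∧
    ∀ τ ∈ Set.Icc s t, γ τ = γ s + ∫ u in s..τ, γ' u

/-- The action `A^{W,b}_{s,t}(γ) = ∫_s^t ((1/2)|γ̇ - b|² + ∇F(γ)·γ̇ (W(τ) - W(t)) - (1/2)|b|²) dτ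
- F(γ(s)) (W(t) - W(s))`, expressed via the pair `(γ, γ')`. -/
noncomputable def actionB {d : ℕ} (F : EuclideanSpace ℝ (Fin d) → ℝ) (W : ℝ → ℝ)
    (b : EuclideanSpace ℝ (Fin d)) (γ γ' : ℝ → EuclideanSpace ℝ (Fin d)) (s t : ℝ) : ℝ :=
  (∫ τ in s..t, ((1/2) * ‖γ' τ - b‖^2
      + ⟪gradient F (γ τ), γ' τ⟫ * (W τ - W t) - (1/2) * ‖b‖^2))
    - F (γ s) * (W t - W s)

/-- `max_{s ≤ τ ≤ t} |W(τ) - W(t)|`. -/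
noncomputable def maxW (W : ℝ → ℝ) (s t : ℝ) : ℝ :=
  sSup ((fun τ => |W τ - W t|) '' Set.Icc s t)

/-- `v ∈ ℤ^d`. -/
def IsIntVec {d : ℕ} (v : EuclideanSpace ℝ (Fin d)) : Prop :=
  ∀ i, ∃ k : ℤ, v i = (k : ℝ)

/-- The Lax–Oleinik value
`ψ(x, t) = inf { ψ₀(γ(s)) + A^{W,b}_{s,t}(γ) : γ absolutely continuous on [s,t], γ(t) = x }`. -/
noncomputable def laxB {d : ℕ} (F : EuclideanSpace ℝ (Fin d) → ℝ) (W : ℝ → ℝ)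
    (b : EuclideanSpace ℝ (Fin d)) (ψ₀ : EuclideanSpace ℝ (Fin d) → ℝ) (s t : ℝ)
    (x : EuclideanSpace ℝ (Fin d)) : ℝ :=
  sInf {r : ℝ | ∃ γ γ' : ℝ → EuclideanSpace ℝ (Fin d),
    IsACWith γ γ' s t ∧ γ t = x ∧ r = ψ₀ (γ s) + actionB F W b γ γ' s t}

/-!
Both values are infima over curves that start at time `s = t₀ - 1`. A competitor for one of them
becomes a competitor for the other: translate its starting point by an integer vector (invisible
to the periodic `ψ₀`) to within `√d` of the other target and follow a straight segment, of
duration at least `1`, to it. If `|W(τ) - W(t)| ≤ K`, the Lagrangian differs from `‖γ̇‖²/2` by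
at most `‖γ̇‖ (‖b‖ + C₁ K)`, so every action is at least `-(t - s) (‖b‖ + C₁ K)² / 2` up to the
boundary term, while the segment's is `O(d + √d (‖b‖ + C₁ K))`. With `K = 2 max |W(τ) - W(tᵢ)|`
the error is quadratic in the oscillation of `W`.
-/

section Lagrangian

variable {E : Type*} [NormedAddCommGroup E] [InnerProductSpace ℝ E]

/-- The integrand of `actionB` at `g = ∇F(γ τ)`, `p = γ̇ τ`, `k = W τ - W t`. -/
noncomputable def lagrangianB (b g p : E) (k : ℝ) : ℝ :=
  (1/2) * ‖p - b‖^2 + ⟪g, p⟫ * k - (1/2) * ‖b‖^2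

variable {b g p : E} {k C K : ℝ}

theorem abs_lagrangianB_sub_le (hg : ‖g‖ ≤ C) (hk : |k| ≤ K) :
    |lagrangianB b g p k - ‖p‖^2 / 2| ≤ ‖p‖ * (‖b‖ + C * K) := by
  have hpb : |⟪p, b⟫| ≤ ‖p‖ * ‖b‖ := abs_real_inner_le_norm p b
  have hgpk : |⟪g, p⟫ * k| ≤ ‖p‖ * (C * K) := by
    rw [abs_mul]
    calc |⟪g, p⟫| * |k| ≤ (‖g‖ * ‖p‖) * K :=
          mul_le_mul (abs_real_inner_le_norm g p) hk (abs_nonneg _) (by positivity)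
      _ ≤ ‖p‖ * (C * K) := by
          nlinarith [mul_le_mul_of_nonneg_right hg (mul_nonneg (norm_nonneg p) ((abs_nonneg k).trans hk))]
  have hsplit : lagrangianB b g p k - ‖p‖^2 / 2 = ⟪g, p⟫ * k - ⟪p, b⟫ := by
    rw [lagrangianB, norm_sub_sq_real]
    ring
  rw [hsplit]
  linarith [abs_sub (⟪g, p⟫ * k) ⟪p, b⟫]

theorem neg_sq_div_two_le_lagrangianB (hg : ‖g‖ ≤ C) (hk : |k| ≤ K) :
    -((‖b‖ + C * K)^2 / 2) ≤ lagrangianB b g p k := by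
  nlinarith [(abs_le.mp (abs_lagrangianB_sub_le (b := b) (p := p) hg hk)).1,
    sq_nonneg (‖p‖ - (‖b‖ + C * K))]

theorem lagrangianB_le (hg : ‖g‖ ≤ C) (hk : |k| ≤ K) :
    lagrangianB b g p k ≤ ‖p‖^2 / 2 + ‖p‖ * (‖b‖ + C * K) := by
  linarith [(abs_le.mp (abs_lagrangianB_sub_le (b := b) (p := p) hg hk)).2]

end Lagrangian

section IntervalIntegral

variable {f : ℝ → ℝ} {a c m : ℝ}

/-- No integrability is needed: a non-integrable `f` has integral `0 ≤ (c - a) * m`. -/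
theorem intervalIntegral_le_mul_of_forall_le (hac : a ≤ c) (hm : 0 ≤ m)
    (hf : ∀ τ ∈ Icc a c, f τ ≤ m) : ∫ τ in a..c, f τ ≤ (c - a) * m := by
  by_cases hfi : IntervalIntegrable f volume a c
  · simpa using intervalIntegral.integral_mono_on hac hfi intervalIntegrable_const hf
  · rw [intervalIntegral.integral_undef hfi]
    exact mul_nonneg (sub_nonneg.2 hac) hm

theorem neg_mul_le_intervalIntegral_of_forall_neg_le (hac : a ≤ c) (hm : 0 ≤ m)
    (hf : ∀ τ ∈ Icc a c, -m ≤ f τ) : -((c - a) * m) ≤ ∫ τ in a..c, f τ := by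
  have h := intervalIntegral_le_mul_of_forall_le (f := fun τ => -f τ) hac hm
    fun τ hτ => neg_le.mp (hf τ hτ)
  rw [intervalIntegral.integral_neg] at h
  linarith

end IntervalIntegral

theorem abs_sub_le_maxW {W : ℝ → ℝ} {s t τ : ℝ} (hW : ContinuousOn W (Icc s t))
    (hτ : τ ∈ Icc s t) : |W τ - W t| ≤ maxW W s t :=
  le_csSup (isCompact_Icc.bddAbove_image ((hW.sub continuousOn_const).abs)) (mem_image_of_mem _ hτ)

theorem abs_sub_le_two_mul_maxW {W : ℝ → ℝ} {s t τ σ : ℝ} (hW : ContinuousOn W (Icc s t))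
    (hτ : τ ∈ Icc s t) (hσ : σ ∈ Icc s t) : |W τ - W σ| ≤ 2 * maxW W s t := by
  have h := abs_sub_le (W τ) (W t) (W σ)
  rw [abs_sub_comm (W t)] at h
  linarith [abs_sub_le_maxW hW hτ, abs_sub_le_maxW hW hσ]

section Euclidean

variable {d : ℕ}

theorem exists_isIntVec_norm_sub_le_sqrt (z : EuclideanSpace ℝ (Fin d)) :
    ∃ v : EuclideanSpace ℝ (Fin d), IsIntVec v ∧ ‖z - v‖ ≤ √d := by
  refine ⟨WithLp.toLp 2 fun i => (round (z i) : ℝ), fun i => ⟨round (z i), rfl⟩, ?_⟩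
  rw [EuclideanSpace.norm_eq]
  gcongr
  calc ∑ i, ‖z i - round (z i)‖^2 ≤ ∑ _i : Fin d, (1 : ℝ) := by
        gcongr with i
        rw [Real.norm_eq_abs, sq_abs]
        nlinarith [abs_le.mp (abs_sub_round (z i))]
    _ = d := by simp

theorem isACWith_affine (y w : EuclideanSpace ℝ (Fin d)) (s t : ℝ) :
    IsACWith (fun τ => y + (τ - s) • w) (fun _ => w) s t :=
  ⟨intervalIntegrable_const, fun τ _ => by simp [intervalIntegral.integral_const]⟩

variable {F : EuclideanSpace ℝ (Fin d) → ℝ} {W : ℝ → ℝ} {b : EuclideanSpace ℝ (Fin d)}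
  {ψ₀ : EuclideanSpace ℝ (Fin d) → ℝ} {C₀ C₁ K s t : ℝ}

theorem actionB_eq (γ γ' : ℝ → EuclideanSpace ℝ (Fin d)) :
    actionB F W b γ γ' s t
      = (∫ τ in s..t, lagrangianB b (gradient F (γ τ)) (γ' τ) (W τ - W t))
        - F (γ s) * (W t - W s) := rfl

theorem abs_mul_sub_le_mul (hC₀ : ∀ x, |F x| ≤ C₀) (hst : s ≤ t)
    (hK : ∀ τ ∈ Icc s t, |W τ - W t| ≤ K) (x : EuclideanSpace ℝ (Fin d)) :
    |F x * (W t - W s)| ≤ C₀ * K := by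
  rw [abs_mul, abs_sub_comm]
  exact mul_le_mul (hC₀ x) (hK s ⟨le_rfl, hst⟩) (abs_nonneg _) ((abs_nonneg _).trans (hC₀ x))

theorem neg_le_actionB (hC₀ : ∀ x, |F x| ≤ C₀) (hC₁ : ∀ x, ‖gradient F x‖ ≤ C₁) (hst : s ≤ t)
    (hK : ∀ τ ∈ Icc s t, |W τ - W t| ≤ K) (γ γ' : ℝ → EuclideanSpace ℝ (Fin d)) :
    -((t - s) * ((‖b‖ + C₁ * K)^2 / 2) + C₀ * K) ≤ actionB F W b γ γ' s t := by
  have hint := neg_mul_le_intervalIntegral_of_forall_neg_le hst (by positivity)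
    fun τ hτ => neg_sq_div_two_le_lagrangianB (b := b) (p := γ' τ) (hC₁ (γ τ)) (hK τ hτ)
  rw [actionB_eq]
  linarith [(abs_le.mp (abs_mul_sub_le_mul hC₀ hst hK (γ s))).2]

theorem actionB_affine_le (hC₀ : ∀ x, |F x| ≤ C₀) (hC₁ : ∀ x, ‖gradient F x‖ ≤ C₁)
    (hst : s ≤ t) (hK : ∀ τ ∈ Icc s t, |W τ - W t| ≤ K) (y w : EuclideanSpace ℝ (Fin d)) :
    actionB F W b (fun τ => y + (τ - s) • w) (fun _ => w) s t
      ≤ (t - s) * (‖w‖^2 / 2 + ‖w‖ * (‖b‖ + C₁ * K)) + C₀ * K := by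
  have hC₁0 : 0 ≤ C₁ := (norm_nonneg _).trans (hC₁ 0)
  have hK0 : 0 ≤ K := (abs_nonneg _).trans (hK s ⟨le_rfl, hst⟩)
  have hint := intervalIntegral_le_mul_of_forall_le hst (by positivity)
    fun τ hτ => lagrangianB_le (b := b) (p := w) (hC₁ (y + (τ - s) • w)) (hK τ hτ)
  rw [actionB_eq]
  linarith [(abs_le.mp (abs_mul_sub_le_mul hC₀ hst hK (y + (s - s) • w))).1]

theorem laxB_le (hψ₀ : BddBelow (range ψ₀)) (hC₀ : ∀ x, |F x| ≤ C₀)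
    (hC₁ : ∀ x, ‖gradient F x‖ ≤ C₁) (hst : s ≤ t) (hK : ∀ τ ∈ Icc s t, |W τ - W t| ≤ K)
    {x : EuclideanSpace ℝ (Fin d)} {γ γ' : ℝ → EuclideanSpace ℝ (Fin d)}
    (hγ : IsACWith γ γ' s t) (hx : γ t = x) :
    laxB F W b ψ₀ s t x ≤ ψ₀ (γ s) + actionB F W b γ γ' s t := by
  obtain ⟨m, hm⟩ := hψ₀
  refine csInf_le ⟨m - ((t - s) * ((‖b‖ + C₁ * K)^2 / 2) + C₀ * K), ?_⟩ ⟨γ, γ', hγ, hx, rfl⟩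
  rintro _ ⟨γ, γ', -, -, rfl⟩
  linarith [hm (mem_range_self (γ s)), neg_le_actionB (b := b) hC₀ hC₁ hst hK γ γ']

theorem le_laxB {x : EuclideanSpace ℝ (Fin d)} {r : ℝ}
    (h : ∀ γ γ', IsACWith γ γ' s t → γ t = x → r ≤ ψ₀ (γ s) + actionB F W b γ γ' s t) :
    r ≤ laxB F W b ψ₀ s t x :=
  le_csInf ⟨_, _, _, isACWith_affine x 0 s t, by simp, rfl⟩
    (by rintro _ ⟨γ, γ', hγ, hx, rfl⟩; exact h γ γ' hγ hx)

end Euclidean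

section Comparison

variable {d : ℕ} {F : EuclideanSpace ℝ (Fin d) → ℝ} {W : ℝ → ℝ} {b : EuclideanSpace ℝ (Fin d)}
  {ψ₀ : EuclideanSpace ℝ (Fin d) → ℝ} {C₀ C₁ K ℓ L s t t' : ℝ}

theorem laxB_le_laxB_add (hψ₀ : BddBelow (range ψ₀))
    (hψ₀per : ∀ x v, IsIntVec v → ψ₀ (x + v) = ψ₀ x) (hC₀ : ∀ x, |F x| ≤ C₀)
    (hC₁ : ∀ x, ‖gradient F x‖ ≤ C₁) (hℓ : 0 < ℓ) (hst : s ≤ t) (htL : t - s ≤ L)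
    (ht' : ℓ ≤ t' - s) (hK : ∀ τ ∈ Icc s t, |W τ - W t| ≤ K)
    (hK' : ∀ τ ∈ Icc s t', |W τ - W t'| ≤ K) (x x' : EuclideanSpace ℝ (Fin d)) :
    laxB F W b ψ₀ s t' x' ≤ laxB F W b ψ₀ s t x
      + (L * ((‖b‖ + C₁ * K)^2 / 2) + d / (2 * ℓ) + √d * (‖b‖ + C₁ * K) + 2 * (C₀ * K)) := by
  have hC₁0 : 0 ≤ C₁ := (norm_nonneg _).trans (hC₁ 0)
  have hK0 : 0 ≤ K := (abs_nonneg _).trans (hK s ⟨le_rfl, hst⟩)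
  have hpos' : 0 < t' - s := hℓ.trans_le ht'
  have hst' : s ≤ t' := by linarith
  rw [← sub_le_iff_le_add]
  refine le_laxB fun γ γ' _ _ => ?_
  obtain ⟨v, hv, hvx⟩ := exists_isIntVec_norm_sub_le_sqrt (x' - γ s)
  set y := γ s + v
  set w := (t' - s)⁻¹ • (x' - y)
  have hy : ‖x' - y‖ ≤ √d := by rwa [sub_add_eq_sub_sub]
  have hw : (t' - s) * ‖w‖ = ‖x' - y‖ := by
    rw [norm_smul, norm_inv, Real.norm_of_nonneg hpos'.le, mul_inv_cancel_left₀ hpos'.ne']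
  have hend : y + (t' - s) • w = x' := by
    rw [smul_smul, mul_inv_cancel₀ hpos'.ne', one_smul, add_sub_cancel]
  have hseg := laxB_le (b := b) hψ₀ hC₀ hC₁ hst' hK' (isACWith_affine y w s t') hend
  rw [sub_self, zero_smul, add_zero, hψ₀per _ _ hv] at hseg
  have hsegAction := actionB_affine_le (b := b) hC₀ hC₁ hst' hK' y w
  have hγAction := neg_le_actionB (b := b) hC₀ hC₁ hst hK γ γ'
  have hquad : (t' - s) * (‖w‖^2 / 2) ≤ d / (2 * ℓ) := by
    have hr : ‖x' - y‖^2 ≤ d := by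
      simpa using pow_le_pow_left₀ (norm_nonneg _) hy 2
    calc (t' - s) * (‖w‖^2 / 2) = ‖x' - y‖^2 / (2 * (t' - s)) := by
          rw [← hw]; field_simp
      _ ≤ d / (2 * ℓ) := by gcongr
  have hlin : (t' - s) * (‖w‖ * (‖b‖ + C₁ * K)) ≤ √d * (‖b‖ + C₁ * K) := by
    rw [← mul_assoc, hw]
    gcongr
  have hlen : (t - s) * ((‖b‖ + C₁ * K)^2 / 2) ≤ L * ((‖b‖ + C₁ * K)^2 / 2) := by
    gcongr
  linarith

theorem abs_laxB_sub_laxB_le (hψ₀ : BddBelow (range ψ₀))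
    (hψ₀per : ∀ x v, IsIntVec v → ψ₀ (x + v) = ψ₀ x) (hC₀ : ∀ x, |F x| ≤ C₀)
    (hC₁ : ∀ x, ‖gradient F x‖ ≤ C₁) (hℓ : 0 < ℓ) (ht : ℓ ≤ t - s) (htL : t - s ≤ L)
    (ht' : ℓ ≤ t' - s) (ht'L : t' - s ≤ L) (hK : ∀ τ ∈ Icc s t, |W τ - W t| ≤ K)
    (hK' : ∀ τ ∈ Icc s t', |W τ - W t'| ≤ K) (x x' : EuclideanSpace ℝ (Fin d)) :
    |laxB F W b ψ₀ s t' x' - laxB F W b ψ₀ s t x|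
      ≤ L * ((‖b‖ + C₁ * K)^2 / 2) + d / (2 * ℓ) + √d * (‖b‖ + C₁ * K) + 2 * (C₀ * K) := by
  rw [abs_sub_le_iff, sub_le_iff_le_add', sub_le_iff_le_add']
  exact ⟨laxB_le_laxB_add hψ₀ hψ₀per hC₀ hC₁ hℓ (by linarith) htL ht' hK hK' x x',
    laxB_le_laxB_add hψ₀ hψ₀per hC₀ hC₁ hℓ (by linarith) ht'L ht hK' hK x' x⟩

end Comparison

theorem lax_oleinik_time_difference_bound_periodic_general (d : ℕ) (C₀ C₁ B : ℝ)
    (t₀ ti : ℝ) (ht : t₀ < ti) (x₀ xi : EuclideanSpace ℝ (Fin d)) :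
    ∃ c : ℝ, 0 < c ∧
      ∀ b : EuclideanSpace ℝ (Fin d), ‖b‖ = B →
      ∀ F : EuclideanSpace ℝ (Fin d) → ℝ, ContDiff ℝ 1 F →
        (∀ (x v : EuclideanSpace ℝ (Fin d)), IsIntVec v → F (x + v) = F x) →
        (∀ x, |F x| ≤ C₀) → (∀ x, ‖gradient F x‖ ≤ C₁) →
      ∀ W : ℝ → ℝ, Continuous W →
      ∀ ψ₀ : EuclideanSpace ℝ (Fin d) → ℝ,
        (∃ Cψ : ℝ, ∀ x, |ψ₀ x| ≤ Cψ) →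
        (∀ (x v : EuclideanSpace ℝ (Fin d)), IsIntVec v → ψ₀ (x + v) = ψ₀ x) →
        |laxB F W b ψ₀ (t₀-1) ti xi - laxB F W b ψ₀ (t₀-1) t₀ x₀|
          ≤ c * (1 + (maxW W (t₀-1) ti)^2) := by
  set s := t₀ - 1
  have hL : 0 < ti - s := by linarith
  refine ⟨(ti - s) * (|B|^2 + 4 * |C₁|^2) + d / 2 + √d * (|B| + 2 * |C₁|) + 4 * |C₀| + 1,
    by positivity, ?_⟩
  rintro b rfl F - - hC₀ hC₁ W hW ψ₀ ⟨Cψ, hCψ⟩ hψ₀per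
  have hC₀0 : 0 ≤ C₀ := (abs_nonneg _).trans (hC₀ 0)
  have hC₁0 : 0 ≤ C₁ := (norm_nonneg _).trans (hC₁ 0)
  rw [abs_norm, abs_of_nonneg hC₀0, abs_of_nonneg hC₁0]
  set M := maxW W s ti
  have hM : 0 ≤ M := (abs_nonneg _).trans (abs_sub_le_maxW hW.continuousOn ⟨by linarith, le_rfl⟩)
  have hψ₀ : BddBelow (range ψ₀) := ⟨-Cψ, by rintro _ ⟨x, rfl⟩; exact neg_le_of_abs_le (hCψ x)⟩
  have hKi : ∀ τ ∈ Icc s ti, |W τ - W ti| ≤ 2 * M := fun τ hτ =>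
    abs_sub_le_two_mul_maxW hW.continuousOn hτ ⟨by linarith, le_rfl⟩
  have hK₀ : ∀ τ ∈ Icc s t₀, |W τ - W t₀| ≤ 2 * M := fun τ hτ =>
    abs_sub_le_two_mul_maxW hW.continuousOn (Icc_subset_Icc_right ht.le hτ) ⟨by linarith, ht.le⟩
  refine (abs_laxB_sub_laxB_le hψ₀ hψ₀per hC₀ hC₁ one_pos (by linarith) (by linarith)
    (by linarith) le_rfl hK₀ hKi x₀ xi).trans ?_
  have hM1 : M ≤ 1 + M^2 := by nlinarith [sq_nonneg (M - 1)]
  have hsq : (‖b‖ + C₁ * (2 * M))^2 / 2 ≤ (‖b‖^2 + 4 * C₁^2) * (1 + M^2) := by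
    nlinarith [sq_nonneg (‖b‖ - C₁ * (2 * M)), sq_nonneg C₁, sq_nonneg ‖b‖]
  have hsqrt : 0 ≤ √(d : ℝ) := Real.sqrt_nonneg _
  have hd0 : (0 : ℝ) ≤ d := Nat.cast_nonneg d
  nlinarith [mul_le_mul_of_nonneg_left hsq hL.le, mul_le_mul_of_nonneg_left hM1 hsqrt,
    mul_le_mul_of_nonneg_left hM1 (mul_nonneg hsqrt hC₁0), mul_le_mul_of_nonneg_left hM1 hC₀0,
    mul_nonneg hsqrt (norm_nonneg b), mul_nonneg (mul_nonneg hsqrt (norm_nonneg b)) (sq_nonneg M),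
    mul_nonneg hd0 (sq_nonneg M), sq_nonneg M]

/-- Let `ψ₀` be bounded and `ℤ^d`-periodic, and for `t > t₀ - 1` let
`ψ(x, t) = inf { ψ₀(γ(t₀-1)) + A^{W,b}_{t₀-1,t}(γ) : γ(t) = x }`. Then for any `x₀, x_i`
there is `c > 0` depending only on `d, |b|, C₀, C₁, x₀, x_i, t₀, t_i` (not on `W`, `ψ₀`)
such that `|ψ(x_i, t_i) - ψ(x₀, t₀)| ≤ c (1 + max_{t₀-1 ≤ τ ≤ t_i} |W(τ) - W(t_i)|²)`. -/
theorem lax_oleinik_time_difference_bound_periodic (d : ℕ) (hd : 1 ≤ d) (C₀ C₁ B : ℝ)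
    (t₀ ti : ℝ) (ht : t₀ < ti) (x₀ xi : EuclideanSpace ℝ (Fin d)) :
    ∃ c : ℝ, 0 < c ∧
      ∀ b : EuclideanSpace ℝ (Fin d), ‖b‖ = B →
      ∀ F : EuclideanSpace ℝ (Fin d) → ℝ, ContDiff ℝ 1 F →
        (∀ (x v : EuclideanSpace ℝ (Fin d)), IsIntVec v → F (x + v) = F x) →
        (∀ x, |F x| ≤ C₀) → (∀ x, ‖gradient F x‖ ≤ C₁) →
      ∀ W : ℝ → ℝ, Continuous W →
      ∀ ψ₀ : EuclideanSpace ℝ (Fin d) → ℝ,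
        (∃ Cψ : ℝ, ∀ x, |ψ₀ x| ≤ Cψ) →
        (∀ (x v : EuclideanSpace ℝ (Fin d)), IsIntVec v → ψ₀ (x + v) = ψ₀ x) →
        |laxB F W b ψ₀ (t₀-1) ti xi - laxB F W b ψ₀ (t₀-1) t₀ x₀|
          ≤ c * (1 + (maxW W (t₀-1) ti)^2) :=
  lax_oleinik_time_difference_bound_periodic_general d C₀ C₁ B t₀ ti ht x₀ xi
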